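/- Let D be a finite multiset of integers and let T be the multiset obtained from D by replacing each element with its absolute value. Then the set of sub-multiset sums of D and the set of sub-multiset sums of T have the same cardinality: |D⁺| = |T⁺|. -/

import Mathlib

/-!
Flipping the sign of one element `a < 0` of `D` turns `S ∪ (S + a)` into `(S - a) ∪ S`, where
`S` is the set of subsums of the rest, i.e. it translates the set of subsums by `-a`. Hence
`T⁺` is a translate of `D⁺`, namely by minus the sum of the negative elements of `D`.
-/

/-- The set of sums of sub-multisets of `D` (including the empty sum `0`). -/
def subSums (D : Multiset ℤ) : Finset ℤ :=
  D.powerset.toFinset.image Multiset.sum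

lemma subSums_cons (a : ℤ) (D : Multiset ℤ) :
    subSums (a ::ₘ D) = subSums D ∪ (subSums D).image (· + a) := by
  unfold subSums
  rw [Multiset.powerset_cons, Multiset.toFinset_add, Finset.image_union,
    Multiset.toFinset_map, Finset.image_image, Finset.image_image]
  congr 1
  ext x
  simp [Function.comp, add_comm]

lemma Finset.image_add_right_image_add_right (s : Finset ℤ) (a b : ℤ) :
    (s.image (· + a)).image (· + b) = s.image (· + (a + b)) := by
  rw [Finset.image_image]
  exact congrArg s.image (funext fun x => add_assoc x a b)

lemma subSums_neg_cons (a : ℤ) (D : Multiset ℤ) :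
    subSums (-a ::ₘ D) = (subSums (a ::ₘ D)).image (· + -a) := by
  rw [subSums_cons, subSums_cons, Finset.image_union,
    Finset.image_add_right_image_add_right, add_neg_cancel, Finset.union_comm]
  simp

lemma subSums_cons_of_eq_image_add_right {D M : Multiset ℤ} {c : ℤ}
    (h : subSums M = (subSums D).image (· + c)) (a : ℤ) :
    subSums (a ::ₘ M) = (subSums (a ::ₘ D)).image (· + c) := by
  rw [subSums_cons, subSums_cons, h, Finset.image_union,
    Finset.image_add_right_image_add_right, Finset.image_add_right_image_add_right, add_comm]

lemma subSums_map_abs (D : Multiset ℤ) :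
    subSums (D.map (fun d => |d|)) = (subSums D).image (· + -(D.filter (· < 0)).sum) := by
  induction D using Multiset.induction_on with
  | empty => simp
  | cons a D ih =>
    rw [Multiset.map_cons]
    rcases le_or_gt 0 a with ha | ha
    · rw [abs_of_nonneg ha, Multiset.filter_cons_of_neg (p := (· < 0)) _ ha.not_gt]
      exact subSums_cons_of_eq_image_add_right ih a
    · rw [abs_of_neg ha, Multiset.filter_cons_of_pos (p := (· < 0)) _ ha, subSums_neg_cons,
        subSums_cons_of_eq_image_add_right ih a, Finset.image_add_right_image_add_right,
        Multiset.sum_cons, neg_add, add_comm (-a)]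

theorem stmt1 (D : Multiset ℤ) :
    (subSums D).card = (subSums (D.map (fun d => |d|))).card := by
  rw [subSums_map_abs, Finset.card_image_of_injective _ (add_left_injective _)]
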